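/- Let x ∈ (0,1) be irrational with SCF digits (a_j(x),ε_j(x))_{s_j(x)}, and set P̂_j(x) = P_j(ι(x)), Q̂_j(x) = Q_j(ι(x)) where ι(x)=(1−x)/(1+x) (with the convention P_0 = 0, Q_0 = 1). Then: (i) if s_j = e, then P̂_j = ½(ε_j(Q_{j−1}−P_{j−1}) + (Q_j−P_j)) and Q̂_j = ½(ε_j(Q_{j−1}+P_{j−1}) + (Q_j+P_j)); (ii) if s_j = o, then P_j = ½(ε_j(Q̂_{j−1}−P̂_{j−1}) + (Q̂_j−P̂_j)) and Q_j = ½(ε_j(Q̂_{j−1}+P̂_{j−1}) + (Q̂_j+P̂_j)); (iii) there exists a constant C > 1, independent of x and j, such that 1/C < Q̂_j(x)/Q_j(x) < C for all j ≥ 1. -/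

import Mathlib

open MeasureTheory Real Set Filter Topology

namespace SCF

/-- The involution `ι(x) = (1−x)/(1+x)`. -/
noncomputable def iota (x : ℝ) : ℝ := (1 - x) / (1 + x)

/-- Even continued-fraction step.  For `y ∈ (0,1/2]` one has
`⌊(1/y+1)/2⌋ = k` whenever `1/y ∈ (2k−1, 2k+1)`, so `Te y = |1/y − 2k|`;
explicitly `Te y = 1/y − 2` on `[1/3,1/2]`, `Te y = 1/y − 2k` on
`[1/(2k+1), 1/(2k))` and `Te y = 2k − 1/y` on `[1/(2k), 1/(2k−1))` (`k ≥ 2`). -/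
noncomputable def Te (y : ℝ) : ℝ := |1 / y - 2 * (⌊(1 / y + 1) / 2⌋ : ℝ)|

/-- The spliced continued fraction (SCF) map `T : [0,1] → [0,1]`, with
`T 0 = 0`, `T 1 = 1`.  On `(0,1/2]` it is the even continued fraction map
(see `Te`), and on `(1/2,1)` it is the odd–odd map, which is the conjugate
`ι ∘ Te ∘ ι` of the even map; this agrees with the branchwise definition:
`T x = (k x − (k−1))/(k − (k+1) x)` on `((k−1)/k, (2k−1)/(2k+1)]` and
`T x = (k − (k+1) x)/(k x − (k−1))` on `((2k−1)/(2k+1), k/(k+1)]` for `k ≥ 2`. -/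
noncomputable def T (x : ℝ) : ℝ :=
  if x ≤ 0 then 0
  else if 1 ≤ x then 1
  else if x ≤ 1 / 2 then Te x
  else iota (Te (iota x))

/-- Parity label of a digit: `e` (even cusp) or `o` (odd–odd cusp). -/
inductive Par | e | o
deriving DecidableEq

/-- A candidate SCF digit `(a, ε)_s`. -/
structure Digit where
  a : ℤ
  eps : ℤ
  s : Par
deriving DecidableEq

/-- The digit set `𝒜 = {(k,ε)_s : k ≥ 2, ε = ±1, s ∈ {e,o}} ∪ {(1,+1)_e}`. -/
def Digit.Valid (d : Digit) : Prop :=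
  (2 ≤ d.a ∧ (d.eps = 1 ∨ d.eps = -1)) ∨ (d.a = 1 ∧ d.eps = 1 ∧ d.s = Par.e)

/-- The branch intervals `I_{(a,ε)_s}` of the SCF map. -/
noncomputable def branch (d : Digit) : Set ℝ :=
  match d.s with
  | Par.e =>
      if d.a = 1 then Set.Icc (1/3 : ℝ) (1/2)
      else if d.eps = 1 then Set.Ico (1 / (2 * (d.a : ℝ) + 1)) (1 / (2 * (d.a : ℝ)))
      else Set.Ico (1 / (2 * (d.a : ℝ))) (1 / (2 * (d.a : ℝ) - 1))
  | Par.o =>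
      if d.eps = 1 then
        Set.Ioc ((2 * (d.a : ℝ) - 1) / (2 * (d.a : ℝ) + 1)) ((d.a : ℝ) / ((d.a : ℝ) + 1))
      else
        Set.Ioc (((d.a : ℝ) - 1) / (d.a : ℝ)) ((2 * (d.a : ℝ) - 1) / (2 * (d.a : ℝ) + 1))

open Classical in
/-- The SCF digit of a point `y` (the unique valid digit `d` with `y ∈ I_d`;
well defined for every `y ∈ (0,1)`). -/
noncomputable def digit (y : ℝ) : Digit :=
  if h : ∃ d : Digit, d.Valid ∧ y ∈ branch d then h.choose else ⟨1, 1, Par.e⟩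

/-- The `n`-th SCF digit `(a_n(x), ε_n(x))_{s_n(x)}` of `x`, `n ≥ 1`,
determined by `T^[n−1] x ∈ I_{(a_n,ε_n)_{s_n}}`. -/
noncomputable def dig (n : ℕ) (x : ℝ) : Digit := digit (T^[n - 1] x)

/-- The `n`-th SCF partial quotient `a_n(x)`. -/
noncomputable def a (n : ℕ) (x : ℝ) : ℤ := (dig n x).a

/-- The invariant density `f_μ`. -/
noncomputable def fdens (x : ℝ) : ℝ :=
  2 / (Real.log (2 + Real.sqrt 3) * (1 - (2 - Real.sqrt 3) * x) * (1 + Real.sqrt 3 * x))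

/-- The absolutely continuous `T`-invariant probability measure `μ` on `(0,1)`. -/
noncomputable def mu : Measure ℝ :=
  (volume.restrict (Set.Ioo (0 : ℝ) 1)).withDensity fun x => ENNReal.ofReal (fdens x)

/-- The inverse branches `h_{(a,ε)_s}` of the SCF map `T`. -/
noncomputable def h (d : Digit) (x : ℝ) : ℝ :=
  match d.s with
  | Par.e => 1 / (2 * (d.a : ℝ) + (d.eps : ℝ) * x)
  | Par.o =>
      if d.eps = 1 then (((d.a : ℝ) - 1) * x + (d.a : ℝ)) / ((d.a : ℝ) * x + ((d.a : ℝ) + 1))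
      else ((d.a : ℝ) * x + ((d.a : ℝ) - 1)) / (((d.a : ℝ) + 1) * x + (d.a : ℝ))

/-- Composed inverse branch `h_{A^{(n)}} = h_{A₁} ∘ ⋯ ∘ h_{A_n}` of a word. -/
noncomputable def hWord (l : List Digit) : ℝ → ℝ :=
  l.foldr (fun d g => h d ∘ g) id

/-- The dual inverse branches `bar h_{(b,η)_t}`. -/
noncomputable def hbar (d : Digit) (y : ℝ) : ℝ :=
  match d.s with
  | Par.e => (d.eps : ℝ) / (2 * (d.a : ℝ) + y)
  | Par.o =>
      1 / (1 + (d.eps : ℝ) / (((d.a : ℝ) - ((max 0 d.eps : ℤ) : ℝ)) + 1 / (1 + y)))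

/-- The matrix `M_{(a,ε)_s}` associated with the inverse branch `h_{(a,ε)_s}`. -/
noncomputable def Mdig (d : Digit) : Matrix (Fin 2) (Fin 2) ℝ :=
  match d.s with
  | Par.e => !![0, 1; (d.eps : ℝ), 2 * (d.a : ℝ)]
  | Par.o =>
      !![(d.a : ℝ) - ((max 0 d.eps : ℤ) : ℝ), (d.a : ℝ) - ((max 0 d.eps : ℤ) : ℝ) + (d.eps : ℝ);
         (d.a : ℝ) - ((max 0 d.eps : ℤ) : ℝ) + 1, (d.a : ℝ) - ((max 0 d.eps : ℤ) : ℝ) + (d.eps : ℝ) + 1]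

/-- `M_n(x) = M_{(a₁,ε₁)_{s₁}} ⋯ M_{(a_n,ε_n)_{s_n}}`. -/
noncomputable def Mn (n : ℕ) (x : ℝ) : Matrix (Fin 2) (Fin 2) ℝ :=
  ((List.range n).map fun i => Mdig (digit (T^[i] x))).prod

/-- `P_n(x)`: the `(1,2)`-entry of `M_n(x)` (numerator of the `n`-th convergent). -/
noncomputable def Pc (n : ℕ) (x : ℝ) : ℝ := Mn n x 0 1

/-- `Q_n(x)`: the `(2,2)`-entry of `M_n(x)` (denominator of the `n`-th convergent). -/
noncomputable def Qc (n : ℕ) (x : ℝ) : ℝ := Mn n x 1 1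

/-!
The involution `ι y = (1 - y)/(1 + y)` commutes with `T` on irrationals and exchanges the
branches `(a, ε)_e` and `(a, ε)_o` (fixing `(1, +1)_e`). With `N = !![-1, 1; 1, 1]`, the matrix
of `ι`, this gives `N * M_d = M_{swap d} * N` for every digit, hence `M_n(ι x) = ½ N M_n(x) N`
since `N² = 2`. Reading off the second column gives (i) (for an even digit the first column of
`M_j` is `ε_j` times the second column of `M_{j-1}`), and (ii) is (i) for `ι x`. For (iii),
right multiplication by any digit matrix preserves the cone of row vectors `(p, q)` with
`-q ≤ p ≤ 2q`, `q > 0`; applied to the rows `(1, 1)` and `(-1, 1)` this gives `|P_n| < Q_n` and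
`Q̂_n < 3 Q_n`, and by symmetry `Q_n < 3 Q̂_n`.
-/

open scoped Matrix

lemma one_add_iota {y : ℝ} (hy : 1 + y ≠ 0) : 1 + iota y = 2 / (1 + y) := by
  rw [iota]; field_simp; ring

lemma neg_one_lt_iota {y : ℝ} (hy : -1 < y) : -1 < iota y := by
  have h := one_add_iota (by linarith : 1 + y ≠ 0)
  have : 0 < 2 / (1 + y) := div_pos two_pos (by linarith)
  linarith

lemma iota_iota {y : ℝ} (hy : -1 < y) : iota (iota y) = y := by
  have hy' : 1 + y ≠ 0 := by linarith
  rw [iota, one_add_iota hy', iota]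
  field_simp
  ring

lemma iota_lt_iota_iff {x y : ℝ} (hx : -1 < x) (hy : -1 < y) : iota x < iota y ↔ y < x := by
  have key : ∀ z, -1 < z → iota z = 2 / (1 + z) - 1 := fun z hz => by
    linarith [one_add_iota (by linarith : 1 + z ≠ 0)]
  rw [key x hx, key y hy, sub_lt_sub_iff_right,
    div_lt_div_iff_of_pos_left two_pos (by linarith) (by linarith), add_lt_add_iff_left]

lemma iota_le_iota_iff {x y : ℝ} (hx : -1 < x) (hy : -1 < y) : iota x ≤ iota y ↔ y ≤ x := by
  rw [← not_lt, iota_lt_iota_iff hy hx, not_lt]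

lemma iota_mem_Ioc_iota_iff {u v y : ℝ} (hu : -1 < u) (hv : -1 < v) (hy : -1 < y) :
    iota y ∈ Ioc (iota v) (iota u) ↔ y ∈ Ico u v := by
  rw [mem_Ioc, mem_Ico, iota_lt_iota_iff hv hy, iota_le_iota_iff hy hu, and_comm]

lemma iota_mem_Icc_iota_iff {u v y : ℝ} (hu : -1 < u) (hv : -1 < v) (hy : -1 < y) :
    iota y ∈ Icc (iota v) (iota u) ↔ y ∈ Icc u v := by
  rw [mem_Icc, mem_Icc, iota_le_iota_iff hv hy, iota_le_iota_iff hy hu, and_comm]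

lemma irrational_iota {y : ℝ} (hy : Irrational y) : Irrational (iota y) := by
  have hy' : 1 + y ≠ 0 := fun h => hy.ne_int (-1) (by push_cast; linarith)
  have h := ((hy.intCast_add 1).inv.intCast_mul two_ne_zero).sub_intCast 1
  push_cast at h
  convert h using 1
  linarith [one_add_iota hy', div_eq_mul_inv 2 (1 + y)]

lemma iota_mem_Ioo {y : ℝ} (hy : y ∈ Ioo 0 1) : iota y ∈ Ioo 0 1 := by
  obtain ⟨h0, h1⟩ := hy
  refine ⟨div_pos (by linarith) (by linarith), ?_⟩
  rw [iota, div_lt_one (by linarith)]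
  linarith

def irrUnitInterval : Set ℝ := {y | Irrational y} ∩ Ioo 0 1

lemma mapsTo_iota : MapsTo iota irrUnitInterval irrUnitInterval :=
  fun _ hy => ⟨irrational_iota hy.1, iota_mem_Ioo hy.2⟩

def Par.swap : Par → Par
  | Par.e => Par.o
  | Par.o => Par.e

def Digit.swap (d : Digit) : Digit := if d.a = 1 then d else ⟨d.a, d.eps, d.s.swap⟩

namespace Digit

lemma swap_swap (d : Digit) : d.swap.swap = d := by
  obtain ⟨a, eps, s⟩ := d
  by_cases ha : a = 1 <;> cases s <;> simp [swap, Par.swap, ha]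

lemma eps_swap (d : Digit) : d.swap.eps = d.eps := by
  unfold swap; split_ifs <;> rfl

lemma Valid.swap {d : Digit} (hd : d.Valid) : d.swap.Valid := by
  rcases hd with ⟨ha, he⟩ | ⟨ha, he, hs⟩
  · rw [Digit.swap, if_neg (by omega)]; exact Or.inl ⟨ha, he⟩
  · rw [Digit.swap, if_pos ha]; exact Or.inr ⟨ha, he, hs⟩

lemma Valid.two_le_of_odd {d : Digit} (hd : d.Valid) (hs : d.s = Par.o) : 2 ≤ d.a := by
  rcases hd with ⟨ha, -⟩ | ⟨-, -, hs'⟩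
  · exact ha
  · simp [hs] at hs'

lemma Valid.eps_eq {d : Digit} (hd : d.Valid) : d.eps = 1 ∨ d.eps = -1 := by
  rcases hd with ⟨-, he⟩ | ⟨-, he, -⟩
  exacts [he, Or.inl he]

lemma Valid.swap_s_of_odd {d : Digit} (hd : d.Valid) (hs : d.s = Par.o) : d.swap.s = Par.e := by
  rw [Digit.swap, if_neg (by linarith [hd.two_le_of_odd hs]), hs]; rfl

end Digit

lemma iota_one_div {c : ℝ} (hc : 0 < c) : iota (1 / c) = (c - 1) / (c + 1) := by
  rw [iota]; field_simp

lemma iota_mem_branch_swap_iff_of_even {d : Digit} (hd : d.Valid) (hs : d.s = Par.e) {y : ℝ}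
    (hy : -1 < y) : iota y ∈ branch d.swap ↔ y ∈ branch d := by
  have one_div_gt : ∀ c : ℝ, 0 < c → -1 < 1 / c := fun c hc => by linarith [one_div_pos.2 hc]
  rcases hd with ⟨ha, he | he⟩ | ⟨ha, he, -⟩
  · have ha' : (2 : ℝ) ≤ d.a := by exact_mod_cast ha
    have hsw : d.swap = ⟨d.a, 1, Par.o⟩ := by rw [Digit.swap, if_neg (by omega), hs, he]; rfl
    simp only [hsw, branch, hs, if_neg (show d.a ≠ 1 by omega), he, if_true]
    rw [show (2 * (d.a : ℝ) - 1) / (2 * d.a + 1) = iota (1 / (2 * d.a)) by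
        rw [iota_one_div (by linarith)],
      show (d.a : ℝ) / (d.a + 1) = iota (1 / (2 * d.a + 1)) by
        rw [iota_one_div (by linarith)]; field_simp; ring]
    exact iota_mem_Ioc_iota_iff (one_div_gt _ (by linarith)) (one_div_gt _ (by linarith)) hy
  · have ha' : (2 : ℝ) ≤ d.a := by exact_mod_cast ha
    have hsw : d.swap = ⟨d.a, -1, Par.o⟩ := by rw [Digit.swap, if_neg (by omega), hs, he]; rfl
    simp only [hsw, branch, hs, if_neg (show d.a ≠ 1 by omega), he,
      show (-1 : ℤ) ≠ 1 by decide, if_false]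
    rw [show ((d.a : ℝ) - 1) / d.a = iota (1 / (2 * d.a - 1)) by
        rw [iota_one_div (by linarith)]; field_simp; ring,
      show (2 * (d.a : ℝ) - 1) / (2 * d.a + 1) = iota (1 / (2 * d.a)) by
        rw [iota_one_div (by linarith)]]
    exact iota_mem_Ioc_iota_iff (one_div_gt _ (by linarith)) (one_div_gt _ (by linarith)) hy
  · have hsw : d.swap = d := by rw [Digit.swap, if_pos ha]
    simp only [hsw, branch, hs, ha, if_true]
    have h := iota_mem_Icc_iota_iff (u := 1 / 3) (v := 1 / 2) (by norm_num) (by norm_num) hy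
    rwa [show iota (1 / 2) = 1 / 3 by norm_num [iota],
      show iota (1 / 3) = 1 / 2 by norm_num [iota]] at h

lemma branch_subset_of_even {d : Digit} (hd : d.Valid) (hs : d.s = Par.e) :
    branch d ⊆ Ioc 0 (1 / 2) := by
  rcases hd with ⟨ha, he | he⟩ | ⟨ha, he, -⟩
  · have ha' : (2 : ℝ) ≤ d.a := by exact_mod_cast ha
    simp only [branch, hs, if_neg (show d.a ≠ 1 by omega), he, if_true]
    refine fun y hy => ⟨lt_of_lt_of_le (one_div_pos.2 (by linarith)) hy.1, hy.2.le.trans ?_⟩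
    exact one_div_le_one_div_of_le two_pos (by linarith)
  · have ha' : (2 : ℝ) ≤ d.a := by exact_mod_cast ha
    simp only [branch, hs, if_neg (show d.a ≠ 1 by omega), he, show (-1 : ℤ) ≠ 1 by decide,
      if_false]
    refine fun y hy => ⟨lt_of_lt_of_le (one_div_pos.2 (by linarith)) hy.1, hy.2.le.trans ?_⟩
    exact one_div_le_one_div_of_le two_pos (by linarith)
  · simp only [branch, hs, ha, if_true]
    exact Icc_subset_Ioc (by norm_num) le_rfl

lemma branch_subset_of_odd {d : Digit} (hd : d.Valid) (hs : d.s = Par.o) :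
    branch d ⊆ Ioo (1 / 2) 1 := by
  have ha : (2 : ℝ) ≤ d.a := by exact_mod_cast hd.two_le_of_odd hs
  rcases hd.eps_eq with he | he
  · simp only [branch, hs, he, if_true]
    refine fun y hy => ⟨lt_trans ?_ hy.1, lt_of_le_of_lt hy.2 ?_⟩
    · rw [lt_div_iff₀ (by linarith)]; linarith
    · rw [div_lt_one (by linarith)]; linarith
  · simp only [branch, hs, he, show (-1 : ℤ) ≠ 1 by decide, if_false]
    refine fun y hy => ⟨lt_of_le_of_lt ?_ hy.1, lt_of_le_of_lt hy.2 ?_⟩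
    · rw [le_div_iff₀ (by linarith)]; linarith
    · rw [div_lt_one (by linarith)]; linarith

lemma iota_mem_branch_swap {d : Digit} (hd : d.Valid) {y : ℝ} (hy : y ∈ branch d) :
    iota y ∈ branch d.swap := by
  cases hs : d.s
  · have hy' : -1 < y := by linarith [(branch_subset_of_even hd hs hy).1]
    exact (iota_mem_branch_swap_iff_of_even hd hs hy').2 hy
  · have hy' : -1 < y := by linarith [(branch_subset_of_odd hd hs hy).1]
    have h := iota_mem_branch_swap_iff_of_even hd.swap (hd.swap_s_of_odd hs)
      (neg_one_lt_iota hy')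
    rw [iota_iota hy', Digit.swap_swap] at h
    exact h.1 hy

noncomputable def evenDigit (y : ℝ) : Digit :=
  ⟨⌊(y⁻¹ + 1) / 2⌋, if 2 * (⌊(y⁻¹ + 1) / 2⌋ : ℝ) < y⁻¹ then 1 else -1, Par.e⟩

lemma mem_branch_iff_of_even {d : Digit} (hd : d.Valid) (hs : d.s = Par.e) {y : ℝ}
    (hy : Irrational y) (hy0 : 0 < y) :
    y ∈ branch d ↔
      2 * (d.a : ℝ) - 1 < y⁻¹ ∧ y⁻¹ < 2 * d.a + 1 ∧
        (d.eps = 1 ↔ 2 * (d.a : ℝ) < y⁻¹) := by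
  have hz : ∀ m : ℤ, y⁻¹ ≠ m := hy.inv.ne_int
  have le_iff : ∀ c : ℝ, 0 < c → (1 / c ≤ y ↔ y⁻¹ ≤ c) := fun c hc => by
    rw [one_div_le hc hy0, one_div]
  have lt_iff : ∀ c : ℝ, 0 < c → (y < 1 / c ↔ c < y⁻¹) := fun c hc => by
    rw [lt_one_div hy0 hc, one_div]
  rcases hd with ⟨ha, he | he⟩ | ⟨ha, he, -⟩
  · have ha' : (2 : ℝ) ≤ d.a := by exact_mod_cast ha
    have := hz (2 * d.a + 1)
    simp only [branch, hs, if_neg (show d.a ≠ 1 by omega), he, if_true, mem_Ico,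
      le_iff _ (by linarith : (0 : ℝ) < 2 * d.a + 1),
      lt_iff _ (by linarith : (0 : ℝ) < 2 * d.a)]
    push_cast at this
    grind
  · have ha' : (2 : ℝ) ≤ d.a := by exact_mod_cast ha
    have := hz (2 * d.a)
    simp only [branch, hs, if_neg (show d.a ≠ 1 by omega), he, show (-1 : ℤ) ≠ 1 by decide,
      if_false, mem_Ico, le_iff _ (by linarith : (0 : ℝ) < 2 * d.a),
      lt_iff _ (by linarith : (0 : ℝ) < 2 * d.a - 1)]
    push_cast at this
    grind
  · have h2 := hz 2
    have h3 := hz 3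
    simp only [branch, hs, ha, he, if_true, mem_Icc, le_iff 3 three_pos,
      le_one_div hy0 two_pos, one_div y]
    push_cast at h2 h3 ⊢
    grind

lemma eq_evenDigit_of_mem_branch {d : Digit} (hd : d.Valid) (hs : d.s = Par.e) {y : ℝ}
    (hy : Irrational y) (hb : y ∈ branch d) : d = evenDigit y := by
  obtain ⟨h1, h2, heps⟩ :=
    (mem_branch_iff_of_even hd hs hy (branch_subset_of_even hd hs hb).1).1 hb
  have ha : ⌊(y⁻¹ + 1) / 2⌋ = d.a := Int.floor_eq_iff.2 ⟨by linarith, by linarith⟩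
  have he : d.eps = if 2 * (d.a : ℝ) < y⁻¹ then 1 else -1 := by
    split_ifs with h
    · exact heps.2 h
    · exact hd.eps_eq.resolve_left (mt heps.1 h)
  rw [evenDigit, ha, ← he, ← hs]

lemma evenDigit_spec {y : ℝ} (hy : Irrational y) (h0 : 0 < y) (h2 : y ≤ 1 / 2) :
    (evenDigit y).Valid ∧ y ∈ branch (evenDigit y) := by
  have hz : 2 ≤ y⁻¹ := by rw [le_inv_comm₀ two_pos h0]; linarith
  have hfl := Int.floor_le ((y⁻¹ + 1) / 2)
  have hlt := Int.lt_floor_add_one ((y⁻¹ + 1) / 2)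
  set k := ⌊(y⁻¹ + 1) / 2⌋
  have hk1 : 1 ≤ k := by
    have : (0 : ℝ) < k := by linarith
    exact_mod_cast this
  have hne : y⁻¹ ≠ 2 * k - 1 := by exact_mod_cast hy.inv.ne_int (2 * k - 1)
  have hlow : 2 * (k : ℝ) - 1 < y⁻¹ := lt_of_le_of_ne (by linarith) hne.symm
  have heps : (evenDigit y).eps = 1 ↔ 2 * (k : ℝ) < y⁻¹ := by
    change (if 2 * (k : ℝ) < y⁻¹ then (1 : ℤ) else -1) = 1 ↔ _
    split_ifs with h <;> simp [h]
  have hvalid : (evenDigit y).Valid := by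
    rcases hk1.lt_or_eq with hk | hk
    · exact Or.inl ⟨hk, by dsimp only [evenDigit]; split_ifs <;> simp⟩
    · have h2' : (2 : ℝ) < y⁻¹ := lt_of_le_of_ne hz (by exact_mod_cast (hy.inv.ne_int 2).symm)
      exact Or.inr ⟨hk.symm, heps.2 (by rw [← hk]; push_cast; linarith), rfl⟩
  have hup : y⁻¹ < 2 * (k : ℝ) + 1 := by linarith
  exact ⟨hvalid, (mem_branch_iff_of_even hvalid rfl hy h0).2 ⟨hlow, hup, heps⟩⟩

noncomputable def scfDigit (y : ℝ) : Digit :=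
  if y ≤ 1 / 2 then evenDigit y else (evenDigit (iota y)).swap

lemma scfDigit_spec {y : ℝ} (hy : y ∈ irrUnitInterval) :
    (scfDigit y).Valid ∧ y ∈ branch (scfDigit y) := by
  unfold scfDigit
  split_ifs with h
  · exact evenDigit_spec hy.1 hy.2.1 h
  · have hι := mapsTo_iota hy
    have hι2 : iota y ≤ 1 / 2 := by rw [iota, div_le_iff₀ (by linarith)]; linarith
    obtain ⟨hv, hb⟩ := evenDigit_spec hι.1 hι.2.1 hι2
    have h := iota_mem_branch_swap hv hb
    rw [iota_iota (by linarith)] at h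
    exact ⟨hv.swap, h⟩

lemma eq_scfDigit_of_mem_branch {d : Digit} (hd : d.Valid) {y : ℝ} (hy : Irrational y)
    (hb : y ∈ branch d) : d = scfDigit y := by
  cases hs : d.s
  · rw [scfDigit, if_pos (branch_subset_of_even hd hs hb).2]
    exact eq_evenDigit_of_mem_branch hd hs hy hb
  · rw [scfDigit, if_neg (not_le.2 (branch_subset_of_odd hd hs hb).1),
      ← eq_evenDigit_of_mem_branch hd.swap (hd.swap_s_of_odd hs) (irrational_iota hy)
        (iota_mem_branch_swap hd hb), Digit.swap_swap]

lemma digit_eq_scfDigit {y : ℝ} (hy : y ∈ irrUnitInterval) : digit y = scfDigit y := by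
  have hex : ∃ d : Digit, d.Valid ∧ y ∈ branch d := ⟨_, scfDigit_spec hy⟩
  rw [digit, dif_pos hex]
  exact eq_scfDigit_of_mem_branch hex.choose_spec.1 hy.1 hex.choose_spec.2

lemma digit_spec {y : ℝ} (hy : y ∈ irrUnitInterval) :
    (digit y).Valid ∧ y ∈ branch (digit y) :=
  digit_eq_scfDigit hy ▸ scfDigit_spec hy

lemma digit_iota {y : ℝ} (hy : y ∈ irrUnitInterval) : digit (iota y) = (digit y).swap := by
  obtain ⟨hv, hb⟩ := digit_spec hy
  rw [digit_eq_scfDigit (mapsTo_iota hy)]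
  exact (eq_scfDigit_of_mem_branch hv.swap (irrational_iota hy.1) (iota_mem_branch_swap hv hb)).symm

lemma T_of_le {y : ℝ} (h0 : 0 < y) (h2 : y ≤ 1 / 2) : T y = Te y := by
  rw [T, if_neg (by linarith), if_neg (by linarith), if_pos h2]

lemma T_of_gt {y : ℝ} (h2 : 1 / 2 < y) (h1 : y < 1) : T y = iota (Te (iota y)) := by
  rw [T, if_neg (by linarith), if_neg (by linarith), if_neg (by linarith)]

lemma Te_nonneg (y : ℝ) : 0 ≤ Te y := abs_nonneg _

lemma Te_of_mem_Ioc {y : ℝ} (h1 : 1 / 3 < y) (h2 : y ≤ 1 / 2) : Te y = 1 / y - 2 := by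
  have h0 : 0 < y := by linarith
  have hl : 2 ≤ 1 / y := by rw [le_one_div two_pos h0]; linarith
  have hu : 1 / y < 3 := by rw [one_div_lt h0 three_pos]; linarith
  have hfl : ⌊(1 / y + 1) / 2⌋ = 1 := Int.floor_eq_iff.2 ⟨by push_cast; linarith, by
    push_cast; linarith⟩
  rw [Te, hfl, Int.cast_one, mul_one, abs_of_nonneg (by linarith)]

lemma Te_mem_irrUnitInterval {y : ℝ} (hy : Irrational y) : Te y ∈ irrUnitInterval := by
  have hfl := Int.floor_le ((1 / y + 1) / 2)
  have hlt := Int.lt_floor_add_one ((1 / y + 1) / 2)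
  set k := ⌊(1 / y + 1) / 2⌋
  have hz : Irrational (1 / y - 2 * k) := by
    simpa [one_div] using hy.inv.sub_intCast (2 * k)
  have hne : 1 / y - 2 * k ≠ -1 := by
    simpa using hz.ne_int (-1)
  have hTe : Te y = |1 / y - 2 * k| := rfl
  refine ⟨?_, ?_⟩
  · change Irrational (Te y)
    rw [hTe]
    rcases abs_choice (1 / y - 2 * (k : ℝ)) with h | h <;> rw [h]
    exacts [hz, hz.neg]
  · rw [hTe]
    exact ⟨abs_pos.2 hz.ne_zero,
      abs_lt.2 ⟨lt_of_le_of_ne (by linarith) hne.symm, by linarith⟩⟩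

lemma mapsTo_T : MapsTo T irrUnitInterval irrUnitInterval := by
  rintro y ⟨hy, h0, h1⟩
  rcases le_or_gt y (1 / 2) with h2 | h2
  · rw [T_of_le h0 h2]
    exact Te_mem_irrUnitInterval hy
  · rw [T_of_gt h2 h1]
    exact mapsTo_iota (Te_mem_irrUnitInterval (irrational_iota hy))

lemma T_iota {y : ℝ} (hy : y ∈ irrUnitInterval) : T (iota y) = iota (T y) := by
  obtain ⟨hirr, h0, h1⟩ := hy
  have hι := iota_mem_Ioo ⟨h0, h1⟩
  rcases lt_or_ge y (1 / 3) with h3 | h3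
  · have : 1 / 2 < iota y := by rw [iota, lt_div_iff₀ (by linarith)]; linarith
    rw [T_of_gt this hι.2, iota_iota (by linarith), T_of_le h0 (by linarith)]
  rcases le_or_gt y (1 / 2) with h2 | h2
  · have h3' : 1 / 3 < y := lt_of_le_of_ne h3 (fun h => hirr ⟨1 / 3, by rw [← h]; norm_num⟩)
    have h2' : y < 1 / 2 := lt_of_le_of_ne h2 (fun h => hirr ⟨1 / 2, by rw [h]; norm_num⟩)
    have hι3 : 1 / 3 < iota y := by rw [iota, lt_div_iff₀ (by linarith)]; linarith
    have hι2 : iota y ≤ 1 / 2 := by rw [iota, div_le_iff₀ (by linarith)]; linarith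
    rw [T_of_le hι.1 hι2, T_of_le h0 h2, Te_of_mem_Ioc hι3 hι2, Te_of_mem_Ioc h3' h2,
      iota, iota]
    have e1 : 1 + (1 / y - 2) = (1 - y) / y := by field_simp; ring
    have e2 : 1 - (1 / y - 2) = (3 * y - 1) / y := by field_simp; ring
    rw [e1, e2, div_div_div_cancel_right₀ h0.ne', one_div_div]
    field_simp
    ring
  · have hι2 : iota y ≤ 1 / 2 := by rw [iota, div_le_iff₀ (by linarith)]; linarith
    rw [T_of_le hι.1 hι2, T_of_gt h2 h1, iota_iota (by linarith [Te_nonneg (iota y)])]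

lemma iterate_T_iota {x : ℝ} (hx : x ∈ irrUnitInterval) (n : ℕ) :
    T^[n] (iota x) = iota (T^[n] x) := by
  induction n with
  | zero => rfl
  | succ n ih =>
    rw [Function.iterate_succ_apply', Function.iterate_succ_apply', ih,
      T_iota (mapsTo_T.iterate n hx)]

def iotaMat : Matrix (Fin 2) (Fin 2) ℝ := !![-1, 1; 1, 1]

lemma iotaMat_mul_Mdig {d : Digit} (hd : d.Valid) :
    iotaMat * Mdig d = Mdig d.swap * iotaMat := by
  rcases hd with ⟨ha, he⟩ | ⟨ha, he, hs⟩
  · rw [Digit.swap, if_neg (by omega)]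
    rcases he with he | he <;> cases hs : d.s <;>
    · simp only [Mdig, iotaMat, Par.swap, hs, he, Matrix.mul_fin_two, max_eq_right zero_le_one,
        max_eq_left (show (-1 : ℤ) ≤ 0 by decide)]
      congr 1
      refine Matrix.vec2_eq (Matrix.vec2_eq ?_ ?_) (Matrix.vec2_eq ?_ ?_) <;> push_cast <;> ring
  · rw [Digit.swap, if_pos ha]
    simp only [Mdig, iotaMat, hs, ha, he, Matrix.mul_fin_two]
    congr 1
    refine Matrix.vec2_eq (Matrix.vec2_eq ?_ ?_) (Matrix.vec2_eq ?_ ?_) <;> push_cast <;> ring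

lemma Mn_succ (n : ℕ) (x : ℝ) : Mn (n + 1) x = Mn n x * Mdig (dig (n + 1) x) := by
  rw [Mn, Mn, List.range_succ, List.map_append, List.prod_append, dig]
  simp

lemma dig_iota {x : ℝ} (hx : x ∈ irrUnitInterval) (n : ℕ) :
    dig n (iota x) = (dig n x).swap := by
  rw [dig, dig, iterate_T_iota hx, digit_iota (mapsTo_T.iterate _ hx)]

lemma dig_valid {x : ℝ} (hx : x ∈ irrUnitInterval) (n : ℕ) : (dig n x).Valid :=
  (digit_spec (mapsTo_T.iterate _ hx)).1

lemma iotaMat_mul_Mn {x : ℝ} (hx : x ∈ irrUnitInterval) (n : ℕ) :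
    iotaMat * Mn n x = Mn n (iota x) * iotaMat := by
  induction n with
  | zero => simp [Mn]
  | succ n ih =>
    rw [Mn_succ, Mn_succ, ← mul_assoc, ih, dig_iota hx, mul_assoc,
      iotaMat_mul_Mdig (dig_valid hx _), ← mul_assoc]

lemma iotaMat_mul_self : iotaMat * iotaMat = (2 : ℝ) • 1 := by
  ext i j; fin_cases i <;> fin_cases j <;> norm_num [iotaMat]

lemma Mn_iota {x : ℝ} (hx : x ∈ irrUnitInterval) (n : ℕ) :
    Mn n (iota x) = (2⁻¹ : ℝ) • (iotaMat * Mn n x * iotaMat) := by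
  rw [iotaMat_mul_Mn hx, mul_assoc, iotaMat_mul_self, Matrix.mul_smul, mul_one, smul_smul]
  norm_num

lemma Pc_iota {x : ℝ} (hx : x ∈ irrUnitInterval) (n : ℕ) :
    Pc n (iota x) = (Mn n x 1 0 - Mn n x 0 0 + (Qc n x - Pc n x)) / 2 := by
  simp only [Pc, Qc, Mn_iota hx, iotaMat, Matrix.smul_apply, Matrix.mul_apply, Fin.sum_univ_two,
    Matrix.of_apply, Matrix.cons_val', Matrix.cons_val_zero, Matrix.cons_val_one,
    Matrix.cons_val_fin_one, smul_eq_mul]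
  ring

lemma Qc_iota {x : ℝ} (hx : x ∈ irrUnitInterval) (n : ℕ) :
    Qc n (iota x) = (Mn n x 0 0 + Mn n x 1 0 + (Qc n x + Pc n x)) / 2 := by
  simp only [Pc, Qc, Mn_iota hx, iotaMat, Matrix.smul_apply, Matrix.mul_apply, Fin.sum_univ_two,
    Matrix.of_apply, Matrix.cons_val', Matrix.cons_val_zero, Matrix.cons_val_one,
    Matrix.cons_val_fin_one, smul_eq_mul]
  ring

lemma Mn_succ_apply_zero_of_even {n : ℕ} {x : ℝ} (hs : (dig (n + 1) x).s = Par.e) (i : Fin 2) :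
    Mn (n + 1) x i 0 = (dig (n + 1) x).eps * Mn n x i 1 := by
  simp [Mn_succ, Mdig, hs, Matrix.mul_apply, mul_comm]

lemma convergents_iota_of_even {n : ℕ} {x : ℝ} (hx : x ∈ irrUnitInterval)
    (hs : (dig (n + 1) x).s = Par.e) :
    Pc (n + 1) (iota x) = 1 / 2 * ((dig (n + 1) x).eps * (Qc n x - Pc n x) +
      (Qc (n + 1) x - Pc (n + 1) x)) ∧
    Qc (n + 1) (iota x) = 1 / 2 * ((dig (n + 1) x).eps * (Qc n x + Pc n x) +
      (Qc (n + 1) x + Pc (n + 1) x)) := by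
  rw [Pc_iota hx, Qc_iota hx, Mn_succ_apply_zero_of_even hs 0, Mn_succ_apply_zero_of_even hs 1]
  constructor <;> simp only [Pc, Qc] <;> ring

def rowCone : Set (Fin 2 → ℝ) := {v | 0 < v 1 ∧ -v 1 ≤ v 0 ∧ v 0 ≤ 2 * v 1}

lemma vecMul_Mdig_mem_rowCone {d : Digit} (hd : d.Valid) {v : Fin 2 → ℝ} (hv : v ∈ rowCone) :
    v ᵥ* Mdig d ∈ rowCone := by
  obtain ⟨hq, hl, hu⟩ := hv
  have ha : (1 : ℝ) ≤ d.a := by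
    rcases hd with ⟨ha, -⟩ | ⟨ha, -, -⟩
    · exact_mod_cast (by omega : (1 : ℤ) ≤ d.a)
    · exact_mod_cast ha.ge
  have h1 := mul_nonneg (sub_nonneg.2 ha) (by linarith : 0 ≤ v 0 + v 1)
  have h2 := mul_nonneg (sub_nonneg.2 ha) (by linarith : 0 ≤ 2 * v 1 - v 0)
  have h3 := mul_pos (by linarith : (0 : ℝ) < d.a) hq
  simp only [rowCone, mem_ofPred_eq, Matrix.vecMul, Matrix.vec2_dotProduct]
  cases hs : d.s
  · rcases hd.eps_eq with he | he <;>
    · simp only [Mdig, hs, he, Matrix.of_apply, Matrix.cons_val', Matrix.cons_val_zero,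
        Matrix.cons_val_one, Matrix.cons_val_fin_one]
      push_cast
      refine ⟨?_, ?_, ?_⟩ <;> nlinarith
  · have ha2 : (2 : ℝ) ≤ d.a := by exact_mod_cast hd.two_le_of_odd hs
    have h4 := mul_nonneg (sub_nonneg.2 ha2) (by linarith : 0 ≤ v 0 + v 1)
    rcases hd.eps_eq with he | he <;>
    · simp only [Mdig, hs, he, Matrix.of_apply, Matrix.cons_val', Matrix.cons_val_zero,
        Matrix.cons_val_one, Matrix.cons_val_fin_one, max_eq_right zero_le_one,
        max_eq_left (show (-1 : ℤ) ≤ 0 by decide)]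
      push_cast
      refine ⟨?_, ?_, ?_⟩ <;> nlinarith

lemma vecMul_Mn_mem_rowCone {x : ℝ} (hx : x ∈ irrUnitInterval) (n : ℕ) {v : Fin 2 → ℝ}
    (hv : v ∈ rowCone) : v ᵥ* Mn n x ∈ rowCone := by
  induction n with
  | zero => simpa [Mn] using hv
  | succ n ih =>
    rw [Mn_succ, ← Matrix.vecMul_vecMul]
    exact vecMul_Mdig_mem_rowCone (dig_valid hx _) ih

lemma Mn_bounds {x : ℝ} (hx : x ∈ irrUnitInterval) (n : ℕ) :
    -Qc n x < Pc n x ∧ Pc n x < Qc n x ∧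
      Mn n x 0 0 + Mn n x 1 0 ≤ 2 * (Pc n x + Qc n x) := by
  obtain ⟨hw, -, hw'⟩ := vecMul_Mn_mem_rowCone hx n (v := ![1, 1]) (by norm_num [rowCone])
  obtain ⟨hu, -, -⟩ := vecMul_Mn_mem_rowCone hx n (v := ![-1, 1]) (by norm_num [rowCone])
  simp only [Matrix.vecMul, Matrix.vec2_dotProduct, Matrix.cons_val_zero, Matrix.cons_val_one,
    Matrix.cons_val_fin_one, one_mul, neg_mul] at hw hw' hu
  simp only [Pc, Qc]
  refine ⟨?_, ?_, ?_⟩ <;> linarith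

lemma Qc_pos {x : ℝ} (hx : x ∈ irrUnitInterval) (n : ℕ) : 0 < Qc n x := by
  linarith [Mn_bounds hx n]

lemma Qc_iota_lt {x : ℝ} (hx : x ∈ irrUnitInterval) (n : ℕ) : Qc n (iota x) < 3 * Qc n x := by
  rw [Qc_iota hx]
  linarith [Mn_bounds hx n]

/-- relations between the convergents of `x` and of `ι(x)`
(`P̂_j(x) = P_j(ι x)`, `Q̂_j(x) = Q_j(ι x)`), and uniform comparability of
`Q̂_j` with `Q_j`. -/
theorem hat_convergent_relations :
    (∀ x ∈ Set.Ioo (0 : ℝ) 1, Irrational x → ∀ j : ℕ, 1 ≤ j →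
      (((dig j x).s = Par.e →
          Pc j (iota x) =
            (1/2) * (((dig j x).eps : ℝ) * (Qc (j-1) x - Pc (j-1) x) + (Qc j x - Pc j x)) ∧
          Qc j (iota x) =
            (1/2) * (((dig j x).eps : ℝ) * (Qc (j-1) x + Pc (j-1) x) + (Qc j x + Pc j x))) ∧
       ((dig j x).s = Par.o →
          Pc j x =
            (1/2) * (((dig j x).eps : ℝ) * (Qc (j-1) (iota x) - Pc (j-1) (iota x)) +
              (Qc j (iota x) - Pc j (iota x))) ∧
          Qc j x =
            (1/2) * (((dig j x).eps : ℝ) * (Qc (j-1) (iota x) + Pc (j-1) (iota x)) +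
              (Qc j (iota x) + Pc j (iota x)))))) ∧
    (∃ C : ℝ, 1 < C ∧ ∀ x ∈ Set.Ioo (0 : ℝ) 1, Irrational x → ∀ j : ℕ, 1 ≤ j →
      1 / C < Qc j (iota x) / Qc j x ∧ Qc j (iota x) / Qc j x < C) := by
  refine ⟨fun x hx hirr j hj => ?_, 3, by norm_num, fun x hx hirr j _ => ?_⟩
  · have hxS : x ∈ irrUnitInterval := ⟨hirr, hx⟩
    obtain ⟨n, rfl⟩ := Nat.exists_eq_add_of_le' hj
    rw [Nat.add_sub_cancel]
    refine ⟨convergents_iota_of_even hxS, fun hs => ?_⟩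
    have hs' : (dig (n + 1) (iota x)).s = Par.e := by
      rw [dig_iota hxS]
      exact (dig_valid hxS _).swap_s_of_odd hs
    have h := convergents_iota_of_even (mapsTo_iota hxS) hs'
    rwa [iota_iota (by linarith [hx.1]), dig_iota hxS, Digit.eps_swap] at h
  · have hxS : x ∈ irrUnitInterval := ⟨hirr, hx⟩
    have hQ := Qc_pos hxS j
    have hlt := Qc_iota_lt hxS j
    have hgt := Qc_iota_lt (mapsTo_iota hxS) j
    rw [iota_iota (by linarith [hx.1])] at hgt
    constructor
    · rw [lt_div_iff₀ hQ]; linarith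
    · rw [div_lt_iff₀ hQ]; linarith

end SCF
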